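/- Let r ≥ 3 be odd and A a primitive 2r-th or r-th root of unity. Then the matrix s̃ with entries s̃_{ij} = (-1)^{i+j}[(i+1)(j+1)]_A (0 ≤ i, j ≤ r-2) satisfies (s̃^2)_{ij} = -2r/(A^2 - A^{-2})^2 when i = j or i + j = r - 2, and (s̃^2)_{ij} = 0 otherwise; consequently s̃ has rank (r-1)/2. -/

import Mathlib

/-- The quantum integer `[m]_A = (A^{2m} - A^{-2m})/(A^2 - A^{-2})`. -/
noncomputable def qint (A : ℂ) (m : ℤ) : ℂ :=
  (A ^ (2 * m) - A ^ (-(2 * m))) / (A ^ (2 : ℤ) - A ^ (-2 : ℤ))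

/-!
With `ζ = A²`, a primitive `r`-th root of unity, `[m]_A = (ζ^m - ζ^{-m}) / (ζ - ζ⁻¹)`.
Expanding the products in `(s̃²)_{ij}` and summing the geometric series over a full period
of `ζ` gives `s̃² = c • (1 + J)` with `c = -2r/(A² - A⁻²)²` and `J` the antidiagonal
permutation matrix.
Since `[rt - m]_A = -[m]_A`, also `s̃ J = s̃`, hence `s̃³ = 2c • s̃` and
`rank s̃ = rank s̃² = rank (1 + J) = (r - 1)/2`; for the last equality, `1 + J` and `1 - J` are
conjugate by `diag((-1)^i)` and their ranks add up to `r - 1` because `J² = 1`.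
-/

theorem Fin.revPerm_permMatrix_apply {R : Type*} [Zero R] [One R] {n : ℕ} (i j : Fin n) :
    (Fin.revPerm : Equiv.Perm (Fin n)).permMatrix R i j =
      if (i : ℕ) + j + 1 = n then 1 else 0 := by
  simp only [PEquiv.toMatrix_apply, Equiv.toPEquiv_apply, Option.mem_def, Option.some.injEq,
    Fin.revPerm_apply, Fin.ext_iff, Fin.val_rev]
  have := i.isLt
  exact if_congr (by omega) rfl rfl

namespace Matrix

variable {m n K : Type*} [Field K]

section

variable [Fintype n]

theorem rank_add_le (M N : Matrix m n K) : (M + N).rank ≤ M.rank + N.rank := by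
  have h : LinearMap.range (M + N).mulVecLin ≤
      LinearMap.range M.mulVecLin ⊔ LinearMap.range N.mulVecLin := by
    rintro x ⟨v, rfl⟩
    rw [mulVecLin_add]
    exact Submodule.add_mem_sup ⟨v, rfl⟩ ⟨v, rfl⟩
  exact (Submodule.finrank_mono h).trans (Submodule.finrank_add_le_finrank_add_finrank _ _)

theorem rank_smul_of_ne_zero {c : K} (hc : c ≠ 0) (M : Matrix m n K) : (c • M).rank = M.rank :=
  M.rank_smul_of_mem_nonZeroDivisors (mem_nonZeroDivisors_of_ne_zero hc)

theorem rank_mul_self_of_mul_mul_self_eq_smul {S : Matrix n n K} {c : K} (hc : c ≠ 0)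
    (h : S * (S * S) = c • S) : (S * S).rank = S.rank := by
  refine le_antisymm (rank_mul_le_left S S) ?_
  calc S.rank = (c • S).rank := (rank_smul_of_ne_zero hc S).symm
    _ = (S * (S * S)).rank := by rw [h]
    _ ≤ (S * S).rank := rank_mul_le_right _ _

theorem rank_one_add_add_rank_one_sub [DecidableEq n] {J : Matrix n n K} (h2 : (2 : K) ≠ 0)
    (hJ : J * J = 1) : (1 + J).rank + (1 - J).rank = Fintype.card n := by
  refine le_antisymm (rank_add_rank_le_card_of_mul_eq_zero ?_) ?_
  · rw [Matrix.mul_sub, Matrix.mul_one, Matrix.add_mul, Matrix.one_mul, hJ, add_comm J, sub_self]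
  · calc Fintype.card n = ((2 : K) • (1 : Matrix n n K)).rank := by
          rw [rank_smul_of_ne_zero h2, rank_one]
      _ = ((1 + J) + (1 - J)).rank := by rw [two_smul, add_add_sub_cancel]
      _ ≤ (1 + J).rank + (1 - J).rank := rank_add_le _ _

end

theorem rank_one_add_revPerm_permMatrix (h2 : (2 : K) ≠ 0) {k : ℕ} (hk : Even k) :
    (1 + (Fin.revPerm : Equiv.Perm (Fin k)).permMatrix K).rank = k / 2 := by
  set J := (Fin.revPerm : Equiv.Perm (Fin k)).permMatrix K
  have hJJ : J * J = 1 := by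
    rw [← permMatrix_mul, show Fin.revPerm * Fin.revPerm = (1 : Equiv.Perm (Fin k)) from
      Equiv.ext Fin.rev_rev, permMatrix_one]
  -- `i + rev i = k - 1` is odd, so conjugating by `D` changes the sign of `J`.
  set D : Matrix (Fin k) (Fin k) K := diagonal fun i => (-1) ^ (i : ℕ)
  have hDD : D * D = 1 := by
    rw [diagonal_mul_diagonal, ← diagonal_one]
    congr 1
    funext i
    rw [← pow_add, Even.neg_one_pow ⟨i, rfl⟩]
  have hDJD : D * J * D = -J := by
    ext i j
    rw [mul_diagonal, diagonal_mul, neg_apply]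
    simp only [J, Fin.revPerm_permMatrix_apply]
    split_ifs with h
    · rw [mul_one, ← pow_add]
      obtain ⟨l, hl⟩ := hk
      exact Odd.neg_one_pow ⟨l - 1, by omega⟩
    · simp
  have hD : IsUnit D.det := IsUnit.of_mul_eq_one _ (by rw [← det_mul, hDD, det_one])
  have hrank : (1 - J).rank = (1 + J).rank := by
    have h : D * (1 + J) * D = 1 - J := by
      rw [Matrix.mul_add, Matrix.add_mul, Matrix.mul_one, hDD, hDJD, sub_eq_add_neg]
    rw [← h, rank_mul_eq_left_of_isUnit_det D _ hD, rank_mul_eq_right_of_isUnit_det D _ hD]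
  have := rank_one_add_add_rank_one_sub h2 hJJ
  rw [hrank, Fintype.card_fin] at this
  omega

end Matrix

theorem zpow_sub_zpow_neg_mul_zpow_sub_zpow_neg {K : Type*} [Field K] {x : K} (hx : x ≠ 0)
    (u v : ℤ) : (x ^ u - x ^ (-u)) * (x ^ v - x ^ (-v)) =
      x ^ (u + v) + x ^ (-(u + v)) - x ^ (u - v) - x ^ (-(u - v)) := by
  simp only [zpow_add₀ hx, zpow_sub₀ hx, zpow_neg]
  field_simp
  ring

theorem neg_one_pow_eq_neg_of_odd_add {R : Type*} [Monoid R] [HasDistribNeg R] {a b : ℕ}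
    (h : Odd (a + b)) : (-1 : R) ^ a = -(-1) ^ b := by
  calc (-1 : R) ^ a = (-1) ^ a * ((-1) ^ b * (-1) ^ b) := by
        rw [← pow_add, Even.neg_one_pow ⟨b, rfl⟩, mul_one]
    _ = -(-1) ^ b := by rw [← mul_assoc, ← pow_add, h.neg_one_pow, neg_one_mul]

namespace IsPrimitiveRoot

open Finset

variable {K : Type*} [Field K] {ζ : K} {r : ℕ}

theorem sum_range_zpow_mul (hζ : IsPrimitiveRoot ζ r) (c : ℤ) :
    ∑ k ∈ range r, ζ ^ ((k : ℤ) * c) = if (r : ℤ) ∣ c then (r : K) else 0 := by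
  have hpow : ∀ k : ℕ, ζ ^ ((k : ℤ) * c) = (ζ ^ c) ^ k := fun k => by
    rw [mul_comm, zpow_mul, zpow_natCast]
  simp only [hpow]
  split_ifs with hdvd
  · simp [(hζ.zpow_eq_one_iff_dvd c).mpr hdvd]
  · have hne : ζ ^ c ≠ 1 := mt (hζ.zpow_eq_one_iff_dvd c).mp hdvd
    have hr : (ζ ^ c) ^ r = 1 := by
      rw [← zpow_natCast, ← zpow_mul, mul_comm, zpow_mul, zpow_natCast, hζ.pow_eq_one,
        one_zpow]
    rw [geom_sum_eq hne, hr, sub_self, zero_div]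

theorem sum_range_zpow_sub_zpow_neg_mul (hζ : IsPrimitiveRoot ζ r) (u v : ℤ) :
    ∑ k ∈ range r, (ζ ^ ((k : ℤ) * u) - ζ ^ (-((k : ℤ) * u))) *
        (ζ ^ ((k : ℤ) * v) - ζ ^ (-((k : ℤ) * v))) =
      (if (r : ℤ) ∣ u + v then 2 * (r : K) else 0) -
        if (r : ℤ) ∣ u - v then 2 * (r : K) else 0 := by
  rcases r.eq_zero_or_pos with rfl | hr
  · simp
  have hζ0 : ζ ≠ 0 := hζ.ne_zero hr.ne'
  have hexpand : ∀ k : ℕ, (ζ ^ ((k : ℤ) * u) - ζ ^ (-((k : ℤ) * u))) *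
      (ζ ^ ((k : ℤ) * v) - ζ ^ (-((k : ℤ) * v))) =
        ζ ^ ((k : ℤ) * (u + v)) + ζ ^ ((k : ℤ) * -(u + v)) -
          ζ ^ ((k : ℤ) * (u - v)) - ζ ^ ((k : ℤ) * -(u - v)) := fun k => by
    rw [zpow_sub_zpow_neg_mul_zpow_sub_zpow_neg hζ0, mul_neg, mul_neg, mul_add, mul_sub]
  simp only [hexpand, sum_add_distrib, sum_sub_distrib, hζ.sum_range_zpow_mul, dvd_neg]
  split_ifs <;> ring

theorem sub_inv_ne_zero (hζ : IsPrimitiveRoot ζ r) (hr : 2 < r) : ζ - ζ⁻¹ ≠ 0 := by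
  intro h
  apply hζ.pow_ne_one_of_pos_of_lt two_ne_zero hr
  rw [sub_eq_zero] at h
  rw [sq]
  nth_rewrite 1 [h]
  exact inv_mul_cancel₀ (hζ.ne_zero (by omega))

theorem zpow_two_of_odd {A : K} (hodd : Odd r)
    (hA : IsPrimitiveRoot A (2 * r) ∨ IsPrimitiveRoot A r) :
    IsPrimitiveRoot (A ^ (2 : ℤ)) r := by
  rw [zpow_ofNat]
  rcases hA with h | h
  · exact h.pow (by have := hodd.pos; omega) rfl
  · exact h.pow_of_coprime 2 (Nat.coprime_two_left.mpr hodd)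

end IsPrimitiveRoot

section QInt

variable {A : ℂ}

theorem qint_eq (m : ℤ) :
    qint A m =
      ((A ^ (2 : ℤ)) ^ m - (A ^ (2 : ℤ)) ^ (-m)) / (A ^ (2 : ℤ) - A ^ (-2 : ℤ)) := by
  rw [qint, ← zpow_mul, ← zpow_mul, mul_neg]

theorem qint_mul_sub {r : ℕ} (hr : 0 < r) (hA : (A ^ (2 : ℤ)) ^ r = 1) (t m : ℤ) :
    qint A (r * t - m) = -qint A m := by
  have hA0 : A ^ (2 : ℤ) ≠ 0 := by
    rintro h
    rw [h, zero_pow hr.ne'] at hA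
    exact zero_ne_one hA
  have hper : (A ^ (2 : ℤ)) ^ ((r : ℤ) * t) = 1 := by
    rw [zpow_mul, zpow_natCast, hA, one_zpow]
  rw [qint_eq, qint_eq, zpow_sub₀ hA0, neg_sub, zpow_sub₀ hA0, hper, ← neg_div, neg_sub]
  simp

end QInt

noncomputable def smatrix (A : ℂ) (n : ℕ) : Matrix (Fin n) (Fin n) ℂ :=
  Matrix.of fun i j =>
    (-1 : ℂ) ^ ((i : ℕ) + (j : ℕ)) * qint A ((((i : ℕ) + 1) * ((j : ℕ) + 1) : ℕ))

namespace smatrix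

open Matrix

variable {A : ℂ} {r : ℕ}

theorem mul_self_apply_eq_sum (hζ : IsPrimitiveRoot (A ^ (2 : ℤ)) r) (hr : 0 < r)
    (i j : Fin (r - 1)) :
    (smatrix A (r - 1) * smatrix A (r - 1)) i j = (-1 : ℂ) ^ ((i : ℕ) + (j : ℕ)) *
      ((if (r : ℤ) ∣ ((i + 1 : ℕ) : ℤ) + ((j + 1 : ℕ) : ℤ) then 2 * (r : ℂ) else 0) -
        if (r : ℤ) ∣ ((i + 1 : ℕ) : ℤ) - ((j + 1 : ℕ) : ℤ) then 2 * (r : ℂ) else 0) /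
      (A ^ (2 : ℤ) - A ^ (-2 : ℤ)) ^ 2 := by
  set ζ := A ^ (2 : ℤ)
  set g : ℕ → ℂ := fun k =>
    (ζ ^ ((k : ℤ) * ((i + 1 : ℕ) : ℤ)) - ζ ^ (-((k : ℤ) * ((i + 1 : ℕ) : ℤ)))) *
      (ζ ^ ((k : ℤ) * ((j + 1 : ℕ) : ℤ)) - ζ ^ (-((k : ℤ) * ((j + 1 : ℕ) : ℤ))))
  have hterm : ∀ k : Fin (r - 1), smatrix A (r - 1) i k * smatrix A (r - 1) k j =
      (-1 : ℂ) ^ ((i : ℕ) + (j : ℕ)) * g (k + 1) / (A ^ (2 : ℤ) - A ^ (-2 : ℤ)) ^ 2 := by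
    intro k
    have hsign : (-1 : ℂ) ^ ((i : ℕ) + k) * (-1) ^ ((k : ℕ) + j) =
        (-1) ^ ((i : ℕ) + j) := by
      rw [← pow_add, show (i : ℕ) + k + (k + j) = i + j + 2 * k by ring, pow_add, pow_mul,
        neg_one_sq, one_pow, mul_one]
    simp only [smatrix, of_apply, qint_eq, g, ζ, Nat.cast_mul]
    rw [mul_comm ((k + 1 : ℕ) : ℤ) ((i + 1 : ℕ) : ℤ), ← hsign]
    generalize A ^ (2 : ℤ) - A ^ (-2 : ℤ) = d
    ring
  -- `g 0 = 0`, so the sum over `k = 1, …, r - 1` is a sum over a full period of `ζ`.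
  have hsum : ∑ k : Fin (r - 1), g (k + 1) = ∑ k ∈ Finset.range r, g k := by
    rw [Fin.sum_univ_eq_sum_range (fun k => g (k + 1)), ← Nat.sub_add_cancel hr,
      Finset.sum_range_succ' g]
    simp [g]
  rw [mul_apply, Finset.sum_congr rfl fun k _ => hterm k, ← Finset.sum_div, ← Finset.mul_sum,
    hsum, hζ.sum_range_zpow_sub_zpow_neg_mul]

theorem mul_self_apply (hodd : Odd r) (hζ : IsPrimitiveRoot (A ^ (2 : ℤ)) r)
    (i j : Fin (r - 1)) :
    (smatrix A (r - 1) * smatrix A (r - 1)) i j =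
      if i = j ∨ (i : ℕ) + (j : ℕ) = r - 2 then
        (-2 * r : ℂ) / (A ^ (2 : ℤ) - A ^ (-2 : ℤ)) ^ 2
      else 0 := by
  have hi := i.isLt
  have hj := j.isLt
  have hadd : (r : ℤ) ∣ ((i + 1 : ℕ) : ℤ) + ((j + 1 : ℕ) : ℤ) ↔
      (i : ℕ) + j = r - 2 := by
    rw [← Nat.cast_add, Int.natCast_dvd_natCast]
    refine ⟨fun h => ?_, fun h => by rw [show (i : ℕ) + 1 + (j + 1) = r by omega]⟩
    have := Nat.eq_of_dvd_of_lt_two_mul (by omega) h (by omega)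
    omega
  have hsub : (r : ℤ) ∣ ((i + 1 : ℕ) : ℤ) - ((j + 1 : ℕ) : ℤ) ↔ i = j := by
    rw [← Nat.modEq_iff_dvd, Fin.ext_iff]
    refine ⟨fun h => ?_, fun h => by rw [h]⟩
    have := h.eq_of_lt_of_lt (by omega) (by omega)
    omega
  rw [mul_self_apply_eq_sum hζ hodd.pos]
  simp only [hadd, hsub]
  by_cases hij : i = j
  · subst hij
    have hne : (i : ℕ) + i ≠ r - 2 := by obtain ⟨l, hl⟩ := hodd; omega
    simp only [hne, if_true, if_false, true_or, Even.neg_one_pow ⟨(i : ℕ), rfl⟩]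
    ring
  · by_cases hanti : (i : ℕ) + j = r - 2
    · have hodd' : Odd (r - 2) := by obtain ⟨l, hl⟩ := hodd; exact ⟨l - 1, by omega⟩
      simp only [hanti, hij, if_true, if_false, or_true, hodd'.neg_one_pow]
      ring
    · simp [hanti, hij]

theorem mul_self (hodd : Odd r) (hζ : IsPrimitiveRoot (A ^ (2 : ℤ)) r) :
    smatrix A (r - 1) * smatrix A (r - 1) =
      ((-2 * r : ℂ) / (A ^ (2 : ℤ) - A ^ (-2 : ℤ)) ^ 2) •
        (1 + (Fin.revPerm : Equiv.Perm (Fin (r - 1))).permMatrix ℂ) := by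
  ext i j
  rw [mul_self_apply hodd hζ, Matrix.smul_apply, Matrix.add_apply, one_apply,
    Fin.revPerm_permMatrix_apply]
  have hanti : (i : ℕ) + j + 1 = r - 1 ↔ (i : ℕ) + j = r - 2 := by omega
  simp only [hanti]
  by_cases hij : i = j
  · subst hij
    have hne : (i : ℕ) + i ≠ r - 2 := by obtain ⟨l, hl⟩ := hodd; omega
    simp [hne]
  · simp only [hij, false_or, if_false, zero_add]
    split_ifs <;> simp

theorem mul_revPerm (hodd : Odd r) (hA : (A ^ (2 : ℤ)) ^ r = 1) :
    smatrix A (r - 1) * (Fin.revPerm : Equiv.Perm (Fin (r - 1))).permMatrix ℂ =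
      smatrix A (r - 1) := by
  rw [PEquiv.mul_toMatrix_toPEquiv]
  ext i j
  have hj := j.isLt
  have hsign : Odd ((i : ℕ) + j.rev + (i + j)) := by
    obtain ⟨l, hl⟩ := hodd
    exact ⟨i + l - 1, by rw [Fin.val_rev]; omega⟩
  have hq : (((i : ℕ) + 1) * (j.rev + 1) : ℕ) =
      (r : ℤ) * ((i : ℤ) + 1) - (((i : ℕ) + 1) * (j + 1) : ℕ) := by
    rw [Fin.val_rev]
    push_cast [Nat.cast_sub (show (j : ℕ) + 1 ≤ r - 1 by omega), Nat.cast_sub hodd.pos]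
    ring
  simp only [submatrix_apply, id, Fin.revPerm_symm, Fin.revPerm_apply, smatrix, of_apply]
  rw [neg_one_pow_eq_neg_of_odd_add hsign, hq, qint_mul_sub hodd.pos hA, neg_mul_neg]

theorem mul_mul_self (hodd : Odd r) (hζ : IsPrimitiveRoot (A ^ (2 : ℤ)) r) :
    smatrix A (r - 1) * (smatrix A (r - 1) * smatrix A (r - 1)) =
      (2 * ((-2 * r : ℂ) / (A ^ (2 : ℤ) - A ^ (-2 : ℤ)) ^ 2)) • smatrix A (r - 1) := by
  rw [mul_self hodd hζ, Matrix.mul_smul, Matrix.mul_add, Matrix.mul_one,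
    mul_revPerm hodd hζ.pow_eq_one, ← two_smul ℂ, smul_smul, mul_comm]

end smatrix

theorem smatrix_square_and_rank_odd_general (r : ℕ) (hr : 3 ≤ r) (hodd : Odd r) (A : ℂ)
    (hA : IsPrimitiveRoot A (2 * r) ∨ IsPrimitiveRoot A r)
    (S : Matrix (Fin (r - 1)) (Fin (r - 1)) ℂ)
    (hS : ∀ i j : Fin (r - 1),
      S i j = (-1 : ℂ) ^ ((i : ℕ) + (j : ℕ)) *
        qint A ((((i : ℕ) + 1) * ((j : ℕ) + 1) : ℕ))) :
    (∀ i j : Fin (r - 1),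
      (S * S) i j =
        if i = j ∨ (i : ℕ) + (j : ℕ) = r - 2 then
          (-2 * r : ℂ) / (A ^ (2 : ℤ) - A ^ (-2 : ℤ)) ^ 2
        else 0) ∧
    S.rank = (r - 1) / 2 := by
  have hζ := IsPrimitiveRoot.zpow_two_of_odd hodd hA
  obtain rfl : S = smatrix A (r - 1) := Matrix.ext hS
  refine ⟨smatrix.mul_self_apply hodd hζ, ?_⟩
  have hd : A ^ (2 : ℤ) - A ^ (-2 : ℤ) ≠ 0 := by
    rw [zpow_neg]
    exact hζ.sub_inv_ne_zero (by omega)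
  have hc : (-2 * r : ℂ) / (A ^ (2 : ℤ) - A ^ (-2 : ℤ)) ^ 2 ≠ 0 :=
    div_ne_zero (mul_ne_zero (by norm_num) (Nat.cast_ne_zero.mpr (by omega))) (pow_ne_zero 2 hd)
  rw [← Matrix.rank_mul_self_of_mul_mul_self_eq_smul (mul_ne_zero two_ne_zero hc)
      (smatrix.mul_mul_self hodd hζ), smatrix.mul_self hodd hζ, Matrix.rank_smul_of_ne_zero hc,
    Matrix.rank_one_add_revPerm_permMatrix two_ne_zero (Nat.Odd.sub_odd hodd odd_one)]

theorem smatrix_square_and_rank_odd (r : ℕ) (hr : 3 ≤ r) (hodd : Odd r) (A : ℂ)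
    (hA : IsPrimitiveRoot A (2 * r) ∨ IsPrimitiveRoot A r)
    (hA4 : A ^ (4 : ℕ) ≠ 1)
    (S : Matrix (Fin (r - 1)) (Fin (r - 1)) ℂ)
    (hS : ∀ i j : Fin (r - 1),
      S i j = (-1 : ℂ) ^ ((i : ℕ) + (j : ℕ)) *
        qint A ((((i : ℕ) + 1) * ((j : ℕ) + 1) : ℕ))) :
    (∀ i j : Fin (r - 1),
      (S * S) i j =
        if i = j ∨ (i : ℕ) + (j : ℕ) = r - 2 then
          (-2 * r : ℂ) / (A ^ (2 : ℤ) - A ^ (-2 : ℤ)) ^ 2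
        else 0) ∧
    S.rank = (r - 1) / 2 :=
  smatrix_square_and_rank_odd_general r hr hodd A hA S hS
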